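/- Consider the points a_1 = e_1, ..., a_{r-1} = e_{r-1}, and a_r = (u, u, ..., u) in ℝ^{r-1}, where u = 1/(r-1) + √(3/(r-1) + 1/(r-1)²) and r ≥ 2. Then the minimum over c ∈ ℝ^{r-1} of ∑_{i=1}^r ‖a_i - c‖ equals √(r(r-1)) + √(3 + 1/(r-1)) − √(r/(r-1)). -/

import Mathlib

/-!
A point `c₀` minimises `c ↦ ∑ ‖aᵢ - c‖` as soon as the unit vectors from `c₀` towards the `aᵢ`
sum to zero: pairing each `‖aᵢ - c‖` with the corresponding unit vector (Cauchy–Schwarz) bounds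
the sum from below by its value at `c₀`.

With `n = r - 1`, the configuration is symmetric under permuting coordinates, so we look for the
minimiser on the diagonal, `c₀ = (t, …, t)`. Then `‖eᵢ - c₀‖² = 1 - 2t + n t²` and the unit
vector towards `a_r = (u, …, u)` is `(1, …, 1)/√n`; the balance condition is solved by
`t = (1 + 1/√(n+1))/n`, which gives `‖eᵢ - c₀‖ = √(n/(n+1))`, and the minimum
`n √(n/(n+1)) + √n (u - t)` simplifies to the stated value.
-/

/-- The points `a_1 = e_1, ..., a_{r-1} = e_{r-1}`, `a_r = (u, ..., u)` in `ℝ^{r-1}`. -/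
noncomputable def anPoint (r : ℕ) (u : ℝ) (i : Fin r) : EuclideanSpace ℝ (Fin (r - 1)) :=
  (WithLp.equiv 2 (Fin (r - 1) → ℝ)).symm
    (fun j => if (i : ℕ) < r - 1 then (if (j : ℕ) = (i : ℕ) then 1 else 0) else u)

open Real RealInnerProductSpace Finset

/-- Here `0⁻¹ = 0` lets some `a i` coincide with `c₀`. -/
theorem isLeast_range_sum_norm_sub_of_sum_inv_norm_smul_eq_zero
    {E ι : Type*} [NormedAddCommGroup E] [InnerProductSpace ℝ E] [Fintype ι]
    (a : ι → E) (c₀ : E) (h : ∑ i, ‖a i - c₀‖⁻¹ • (a i - c₀) = 0) :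
    IsLeast (Set.range fun c => ∑ i, ‖a i - c‖) (∑ i, ‖a i - c₀‖) := by
  refine ⟨⟨c₀, rfl⟩, ?_⟩
  rintro _ ⟨c, rfl⟩
  set v := fun i => ‖a i - c₀‖⁻¹ • (a i - c₀)
  have hv_norm (i : ι) : ‖v i‖ ≤ 1 := by
    simpa [v, norm_smul] using inv_mul_le_one_of_le₀ le_rfl (norm_nonneg (a i - c₀))
  have hv_inner (i : ι) : ⟪v i, a i - c₀⟫ = ‖a i - c₀‖ := by
    rw [real_inner_smul_left, real_inner_self_eq_norm_sq]
    rcases eq_or_ne ‖a i - c₀‖ 0 with h0 | h0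
    · simp [h0]
    · field_simp
  calc ∑ i, ‖a i - c₀‖ = ∑ i, ⟪v i, a i - c⟫ := by
        simp_rw [← sub_add_sub_cancel (a _) c₀ c, inner_add_right, sum_add_distrib, hv_inner,
          ← sum_inner, h, inner_zero_left, add_zero]
    _ ≤ ∑ i, ‖a i - c‖ := sum_le_sum fun i _ =>
        (real_inner_le_norm _ _).trans (mul_le_of_le_one_left (norm_nonneg _) (hv_norm i))

theorem EuclideanSpace.norm_toLp_const {ι : Type*} [Fintype ι] (t : ℝ) :
    ‖WithLp.toLp 2 (fun _ : ι => t)‖ = √(Fintype.card ι) * |t| := by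
  simp [EuclideanSpace.norm_eq, sqrt_mul, sqrt_sq_eq_abs]

theorem EuclideanSpace.norm_single_one_sub_toLp_const_sq {ι : Type*} [Fintype ι] [DecidableEq ι]
    (i : ι) (t : ℝ) :
    ‖EuclideanSpace.single i 1 - WithLp.toLp 2 (fun _ : ι => t)‖ ^ 2
      = 1 - 2 * t + Fintype.card ι * t ^ 2 := by
  rw [norm_sub_sq_real, EuclideanSpace.inner_single_left, EuclideanSpace.norm_toLp_const]
  simp [mul_pow]

theorem norm_anPoint_castSucc_sub_toLp_const_sq (n : ℕ) (u t : ℝ) (i : Fin n) :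
    ‖anPoint (n + 1) u i.castSucc - WithLp.toLp 2 (fun _ => t)‖ ^ 2 = 1 - 2 * t + n * t ^ 2 := by
  have hi : (i.castSucc : ℕ) < n + 1 - 1 := by simp
  have hpoint : anPoint (n + 1) u i.castSucc = EuclideanSpace.single ⟨_, hi⟩ 1 := by
    ext j
    simp [anPoint, PiLp.single_apply, Fin.ext_iff]
  rw [hpoint, EuclideanSpace.norm_single_one_sub_toLp_const_sq]
  simp

theorem anPoint_last_sub_toLp_const (n : ℕ) (u t : ℝ) :
    anPoint (n + 1) u (Fin.last n) - WithLp.toLp 2 (fun _ => t)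
      = WithLp.toLp 2 (fun _ => u - t) := by
  ext j
  simp [anPoint]

theorem sum_anPoint_castSucc (n : ℕ) (u : ℝ) :
    ∑ i : Fin n, anPoint (n + 1) u i.castSucc = WithLp.toLp 2 (fun _ => 1) := by
  ext j
  simp only [anPoint, Fin.val_castSucc, add_tsub_cancel_right, Fin.is_lt, ↓reduceIte,
    WithLp.equiv_symm_apply, WithLp.ofLp_sum, Finset.sum_apply, sum_boole, Nat.cast_eq_one]
  exact card_eq_one.2 ⟨⟨j, by omega⟩, by ext; simp [Fin.ext_iff, eq_comm]⟩

noncomputable def centerCoord (N : ℝ) : ℝ := (1 + (√(N + 1))⁻¹) / N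

section centerCoord

variable {N : ℝ} (hN : 0 < N)
include hN

theorem one_sub_mul_centerCoord : 1 - N * centerCoord N = -(√(N + 1))⁻¹ := by
  unfold centerCoord
  field_simp
  ring

theorem one_sub_two_mul_centerCoord_add_mul_sq :
    1 - 2 * centerCoord N + N * centerCoord N ^ 2 = N / (N + 1) := by
  have hs : √(N + 1) ^ 2 = N + 1 := sq_sqrt (by linarith)
  have hs0 : 0 < √(N + 1) := sqrt_pos.2 (by linarith)
  unfold centerCoord
  field_simp
  linear_combination (-1 : ℝ) * hs

theorem centerCoord_lt : centerCoord N < 1 / N + √(3 / N + 1 / N ^ 2) := by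
  have hs : 1 ≤ √(N + 1) := one_le_sqrt.2 (by linarith)
  have h1 : (√(N + 1))⁻¹ / N ≤ 1 / N := by gcongr; exact inv_le_one_of_one_le₀ hs
  have h2 : 1 / N < √(3 / N + 1 / N ^ 2) := by
    rw [lt_sqrt (by positivity)]
    have : 0 < 3 / N := by positivity
    linarith [show (1 / N) ^ 2 = 1 / N ^ 2 by ring]
  unfold centerCoord
  rw [add_div]
  linarith

theorem mul_sqrt_div_add_sqrt_mul_sub_centerCoord :
    N * √(N / (N + 1)) + √N * (1 / N + √(3 / N + 1 / N ^ 2) - centerCoord N)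
      = √((N + 1) * N) + √(3 + 1 / N) - √((N + 1) / N) := by
  have hq : √N ^ 2 = N := sq_sqrt hN.le
  have hq0 : 0 < √N := sqrt_pos.2 hN
  have hs : √(N + 1) ^ 2 = N + 1 := sq_sqrt (by linarith)
  have hs0 : 0 < √(N + 1) := sqrt_pos.2 (by linarith)
  have hw : √(3 / N + 1 / N ^ 2) = √(3 * N + 1) / N := by
    rw [show 3 / N + 1 / N ^ 2 = (3 * N + 1) / N ^ 2 by field_simp, sqrt_div (by linarith),
      sqrt_sq hN.le]
  have hw' : √(3 + 1 / N) = √(3 * N + 1) / √N := by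
    rw [show 3 + 1 / N = (3 * N + 1) / N by field_simp, sqrt_div (by linarith)]
  rw [hw, hw', sqrt_div hN.le, sqrt_div (by linarith), sqrt_mul (by linarith), centerCoord]
  generalize √(3 * N + 1) = w
  field_simp
  linear_combination (N ^ 2 - 1 - N * √(N + 1) ^ 2 + √(N + 1) * w) * hq + (N - N ^ 2) * hs

end centerCoord

theorem stmt9 (r : ℕ) (hr : 2 ≤ r)
    (u : ℝ)
    (hu : u = 1 / ((r : ℝ) - 1) + Real.sqrt (3 / ((r : ℝ) - 1) + 1 / ((r : ℝ) - 1) ^ 2)) :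
    IsLeast (Set.range (fun c : EuclideanSpace ℝ (Fin (r - 1)) =>
        ∑ i : Fin r, ‖anPoint r u i - c‖))
      (Real.sqrt ((r : ℝ) * ((r : ℝ) - 1)) + Real.sqrt (3 + 1 / ((r : ℝ) - 1)) -
        Real.sqrt ((r : ℝ) / ((r : ℝ) - 1))) := by
  obtain ⟨n, rfl⟩ : ∃ n, r = n + 1 := ⟨r - 1, by omega⟩
  have hN : (0 : ℝ) < n := by exact_mod_cast (by omega : 0 < n)
  have hcast : ((n + 1 : ℕ) : ℝ) = n + 1 := by push_cast; ring
  simp only [hcast, add_sub_cancel_right] at hu ⊢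
  set t := centerCoord n
  have hut : 0 < u - t := by rw [hu]; linarith [centerCoord_lt hN]
  have hvertex (i : Fin n) : ‖anPoint (n + 1) u i.castSucc - WithLp.toLp 2 (fun _ => t)‖
      = √(n / (n + 1)) := by
    rw [← one_sub_two_mul_centerCoord_add_mul_sq hN, ← norm_anPoint_castSucc_sub_toLp_const_sq,
      sqrt_sq (norm_nonneg _)]
  have hapex : ‖anPoint (n + 1) u (Fin.last n) - WithLp.toLp 2 (fun _ => t)‖ = √n * (u - t) := by
    rw [anPoint_last_sub_toLp_const, EuclideanSpace.norm_toLp_const, abs_of_pos hut]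
    simp
  convert isLeast_range_sum_norm_sub_of_sum_inv_norm_smul_eq_zero (anPoint (n + 1) u)
    (WithLp.toLp 2 (fun _ => t)) ?_ using 1
  · simp only [Fin.sum_univ_castSucc, hvertex, hapex, sum_const, card_univ, Fintype.card_fin,
      nsmul_eq_mul]
    rw [hu]
    exact (mul_sqrt_div_add_sqrt_mul_sub_centerCoord hN).symm
  · simp only [Fin.sum_univ_castSucc, hvertex, hapex, ← smul_sum, sum_sub_distrib,
      sum_anPoint_castSucc, sum_const, card_univ, Fintype.card_fin]
    rw [anPoint_last_sub_toLp_const]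
    ext j
    simp only [PiLp.add_apply, PiLp.smul_apply, PiLp.sub_apply, PiLp.zero_apply, smul_eq_mul,
      nsmul_eq_mul]
    rw [one_sub_mul_centerCoord hN, sqrt_div hN.le]
    field_simp
    ring
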